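/- arXiv:math/0105002 — 2 statements merged into one kernel-verified Lean document; each statement's English description precedes it below -/
import Mathlib

section
/- The two-variable identity (1 - ab/q) · Σ_{i,j≥0} (-1)^{i+j} a^i b^j q^{C(i,2)+C(j,2)-ij} = 1 + Σ_{n≥1} (-1)^n q^{C(n,2)} (a^n + b^n) holds as formal power series, where C(n,2) = n(n-1)/2. -/
open scoped BigOperators

/-- finite q-Pochhammer symbol `(x;q)_n = ∏_{j=0}^{n-1} (1 - x q^j)` -/
noncomputable def qPoch (x q : ℂ) (n : ℕ) : ℂ := ∏ j ∈ Finset.range n, (1 - x * q ^ j)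

/-- infinite q-Pochhammer symbol `(x;q)_∞ = ∏_{j≥0} (1 - x q^j)` -/
noncomputable def qPochInf (x q : ℂ) : ℂ := ∏' j : ℕ, (1 - x * q ^ j)

/-- Gaussian binomial coefficient in base q, zero outside `0 ≤ k ≤ m`. -/
noncomputable def qbinom (q : ℂ) (m k : ℤ) : ℂ :=
  if 0 ≤ k ∧ k ≤ m then
    qPoch q q m.toNat / (qPoch q q k.toNat * qPoch q q (m - k).toNat)
  else 0

/-! Write `f (i, j)` for the summand on the left and `c = a b / q`. Since
`C(i+1,2) + C(j+1,2) - (i+1)(j+1) = C(i,2) + C(j,2) - i j - 1`, moving one step along the diagonal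
multiplies the summand by `c`: `f (i+1, j+1) = c f (i, j)`. Hence `c ∑ f = ∑ f (i+1, j+1)`, and
`(1 - c) ∑ f` is the sum of `f` over the two coordinate axes, where `f (n, 0) = (-a)^n q^C(n,2)` and
`f (0, n) = (-b)^n q^C(n,2)`. The same relation, `f (k + m, m) = c^m f (k, 0)`, gives absolute
convergence from `‖c‖ < 1` and the convergence of the two axis series. -/

open Filter Function Topology

lemma Int.natCast_mul_sub_one_ediv_two (n : ℕ) : (n : ℤ) * (n - 1) / 2 = n.choose 2 := by
  rcases n with _ | n
  · simp
  · rw [Nat.choose_two_right, Int.natCast_div, Nat.add_sub_cancel]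
    push_cast
    ring_nf

lemma Nat.mul_add_one_div_two (n : ℕ) : n * (n + 1) / 2 = (n + 1).choose 2 := by
  rw [Nat.choose_two_right, Nat.add_sub_cancel, mul_comm]

lemma summable_pow_mul_pow_choose_two (x : ℝ) {s : ℝ} (hs₀ : 0 ≤ s) (hs₁ : s < 1) :
    Summable fun n : ℕ => x ^ n * s ^ n.choose 2 := by
  refine summable_of_ratio_norm_eventually_le (r := 1 / 2) (by norm_num) ?_
  have hlim : Tendsto (fun n : ℕ => ‖x‖ * s ^ n) atTop (𝓝 0) := by
    simpa using (tendsto_pow_atTop_nhds_zero_of_lt_one hs₀ hs₁).const_mul ‖x‖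
  filter_upwards [hlim.eventually_le_const (by norm_num : (0 : ℝ) < 1 / 2)] with n hn
  calc ‖x ^ (n + 1) * s ^ (n + 1).choose 2‖ = ‖x‖ * s ^ n * ‖x ^ n * s ^ n.choose 2‖ := by
        simp only [Nat.choose_succ_succ', Nat.choose_one_right, norm_mul, norm_pow,
          Real.norm_of_nonneg hs₀]
        ring
    _ ≤ 1 / 2 * ‖x ^ n * s ^ n.choose 2‖ := by gcongr

section Diagonal

variable {R : Type*} [NormedRing R] {f : ℕ × ℕ → R} {c : R}

lemma apply_add_add_of_apply_add_one_add_one (hf : ∀ i j, f (i + 1, j + 1) = c * f (i, j))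
    (m i j : ℕ) : f (i + m, j + m) = c ^ m * f (i, j) := by
  induction m with
  | zero => simp
  | succ m ih => rw [← add_assoc, ← add_assoc, hf, ih, pow_succ', mul_assoc]

lemma summable_of_apply_add_one_add_one [NormOneClass R] [CompleteSpace R] (hc : ‖c‖ < 1)
    (hf : ∀ i j, f (i + 1, j + 1) = c * f (i, j))
    (h₁ : Summable fun i => ‖f (i, 0)‖) (h₂ : Summable fun j => ‖f (0, j)‖) : Summable f := by
  let ι : ℕ × ℕ → (ℕ × ℕ) ⊕ (ℕ × ℕ) := fun p =>
    if p.2 ≤ p.1 then .inl (p.2, p.1 - p.2) else .inr (p.1, p.2 - p.1)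
  let G : (ℕ × ℕ) ⊕ (ℕ × ℕ) → ℝ :=
    Sum.elim (fun x => ‖c‖ ^ x.1 * ‖f (x.2, 0)‖) (fun x => ‖c‖ ^ x.1 * ‖f (0, x.2)‖)
  have hgeom := summable_geometric_of_lt_one (norm_nonneg c) hc
  have hG : Summable G := Summable.sum G
    (hgeom.mul_of_nonneg h₁ (fun _ => by positivity) fun _ => norm_nonneg _)
    (hgeom.mul_of_nonneg h₂ (fun _ => by positivity) fun _ => norm_nonneg _)
  have hι : Injective ι := by
    rintro ⟨i, j⟩ ⟨i', j'⟩ h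
    simp only [ι] at h
    split_ifs at h <;> simp only [Sum.inl.injEq, Sum.inr.injEq, Prod.mk.injEq] at h ⊢ <;> omega
  refine .of_norm_bounded (hG.comp_injective hι) fun ⟨i, j⟩ => ?_
  simp only [ι, comp_apply]
  have hpow (m : ℕ) (x : R) : ‖c ^ m * x‖ ≤ ‖c‖ ^ m * ‖x‖ :=
    (norm_mul_le _ _).trans (mul_le_mul_of_nonneg_right (norm_pow_le c m) (norm_nonneg x))
  split_ifs with hji
  · obtain ⟨k, rfl⟩ := Nat.exists_eq_add_of_le hji
    have := apply_add_add_of_apply_add_one_add_one hf j k 0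
    rw [zero_add, add_comm k] at this
    simpa [G, this] using hpow j (f (k, 0))
  · obtain ⟨k, rfl⟩ := Nat.exists_eq_add_of_le (le_of_not_ge hji)
    have := apply_add_add_of_apply_add_one_add_one hf i 0 k
    rw [zero_add, add_comm k] at this
    simpa [G, this] using hpow i (f (0, k))

lemma range_axes_eq_compl_range_add_one_add_one :
    Set.range (Sum.elim (fun i : ℕ => (i, 0)) fun j : ℕ => (0, j + 1)) =
      (Set.range fun p : ℕ × ℕ => (p.1 + 1, p.2 + 1))ᶜ := by
  ext ⟨_ | i, _ | j⟩ <;> simp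

lemma one_sub_mul_tsum_eq_of_apply_add_one_add_one [CompleteSpace R] (hsum : Summable f)
    (hf : ∀ i j, f (i + 1, j + 1) = c * f (i, j)) :
    (1 - c) * ∑' p, f p = f (0, 0) + ∑' n : ℕ, (f (n + 1, 0) + f (0, n + 1)) := by
  have hinj : Injective (fun p : ℕ × ℕ => (p.1 + 1, p.2 + 1)) := by
    rintro ⟨i, j⟩ ⟨i', j'⟩ h
    simpa using h
  have haxes : Injective (Sum.elim (fun i : ℕ => (i, 0)) fun j : ℕ => (0, j + 1)) := by
    rintro (i | j) (i' | j') h <;> simp_all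
  have hrow : Summable fun i => f (i, 0) :=
    hsum.comp_injective (haxes.comp Sum.inl_injective)
  have hcol : Summable fun j => f (0, j + 1) :=
    hsum.comp_injective (haxes.comp Sum.inr_injective)
  have hinner : HasSum (fun p : ℕ × ℕ => f (p.1 + 1, p.2 + 1)) (c * ∑' p, f p) := by
    simpa only [hf] using hsum.hasSum.mul_left c
  have htotal := ((hinj.hasSum_range_iff).2 hinner).add_isCompl
    (range_axes_eq_compl_range_add_one_add_one ▸ isCompl_compl)
    ((haxes.hasSum_range_iff).2 (hrow.hasSum.sum hcol.hasSum))
  rw [sub_mul, one_mul, sub_eq_iff_eq_add',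
    ((summable_nat_add_iff 1).2 hrow).tsum_add hcol,
    ← add_assoc (f (0, 0)), ← hrow.tsum_eq_zero_add]
  exact htotal.tsum_eq

end Diagonal

section TwoVariable

variable {𝕜 : Type*}

noncomputable def twoVarTerm [Field 𝕜] (q a b : 𝕜) (p : ℕ × ℕ) : 𝕜 :=
  (-1) ^ (p.1 + p.2) * a ^ p.1 * b ^ p.2 * q ^ ((p.1.choose 2 : ℤ) + p.2.choose 2 - p.1 * p.2)

section Field

variable [Field 𝕜] (q a b : 𝕜)

lemma twoVarTerm_add_one_add_one {q : 𝕜} (hq : q ≠ 0) (i j : ℕ) :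
    twoVarTerm q a b (i + 1, j + 1) = a * b / q * twoVarTerm q a b (i, j) := by
  have hexp : ((i + 1).choose 2 : ℤ) + (j + 1).choose 2 - (i + 1 : ℕ) * (j + 1 : ℕ) =
      (i.choose 2 : ℤ) + j.choose 2 - i * j - 1 := by
    simp only [Nat.choose_succ_succ', Nat.choose_one_right]
    push_cast
    ring
  simp only [twoVarTerm, hexp, zpow_sub_one₀ hq]
  field_simp
  ring

lemma twoVarTerm_left (i : ℕ) : twoVarTerm q a b (i, 0) = (-a) ^ i * q ^ i.choose 2 := by
  simp [twoVarTerm, neg_pow a]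

lemma twoVarTerm_right (j : ℕ) : twoVarTerm q a b (0, j) = (-b) ^ j * q ^ j.choose 2 := by
  simp [twoVarTerm, neg_pow b]

end Field

variable [NormedField 𝕜] {q : 𝕜} (a b : 𝕜)

lemma ne_zero_of_norm_mul_norm_lt_norm (hab : ‖a‖ * ‖b‖ < ‖q‖) : q ≠ 0 :=
  norm_pos_iff.1 ((mul_nonneg (norm_nonneg a) (norm_nonneg b)).trans_lt hab)

lemma summable_twoVarTerm [CompleteSpace 𝕜] (hq : ‖q‖ < 1) (hab : ‖a‖ * ‖b‖ < ‖q‖) :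
    Summable (twoVarTerm q a b) := by
  have hq₀ := ne_zero_of_norm_mul_norm_lt_norm a b hab
  refine summable_of_apply_add_one_add_one (c := a * b / q) ?_
    (twoVarTerm_add_one_add_one a b hq₀) ?_ ?_
  · rwa [norm_div, norm_mul, div_lt_one (norm_pos_iff.2 hq₀)]
  · simpa [twoVarTerm_left] using summable_pow_mul_pow_choose_two ‖a‖ (norm_nonneg q) hq
  · simpa [twoVarTerm_right] using summable_pow_mul_pow_choose_two ‖b‖ (norm_nonneg q) hq

lemma one_sub_mul_tsum_twoVarTerm [CompleteSpace 𝕜] (hq : ‖q‖ < 1) (hab : ‖a‖ * ‖b‖ < ‖q‖) :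
    (1 - a * b / q) * ∑' p, twoVarTerm q a b p =
      1 + ∑' n : ℕ, (-1) ^ (n + 1) * q ^ (n + 1).choose 2 * (a ^ (n + 1) + b ^ (n + 1)) := by
  have hq₀ := ne_zero_of_norm_mul_norm_lt_norm a b hab
  rw [one_sub_mul_tsum_eq_of_apply_add_one_add_one (summable_twoVarTerm a b hq hab)
    (twoVarTerm_add_one_add_one a b hq₀)]
  simp only [twoVarTerm_left, twoVarTerm_right, neg_pow a, neg_pow b]
  simp only [pow_zero, Nat.choose_zero_succ, one_mul]
  congr 1
  exact tsum_congr fun n => by ring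

end TwoVariable

theorem stmt_1_general (q a b : ℂ) (hq : ‖q‖ < 1)
    (hab : ‖a‖ * ‖b‖ < ‖q‖) :
    (1 - a * b / q) *
      ∑' p : ℕ × ℕ, (-1 : ℂ) ^ (p.1 + p.2) * a ^ p.1 * b ^ p.2 *
        q ^ ((p.1 : ℤ) * (p.1 - 1) / 2 + (p.2 : ℤ) * (p.2 - 1) / 2 - p.1 * p.2)
      = 1 + ∑' n : ℕ, (-1 : ℂ) ^ (n + 1) * q ^ (n * (n + 1) / 2) *
          (a ^ (n + 1) + b ^ (n + 1)) := by
  simp_rw [Int.natCast_mul_sub_one_ediv_two, Nat.mul_add_one_div_two]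
  exact one_sub_mul_tsum_twoVarTerm a b hq hab

/-- The two-variable identity \eqref{ijn}. -/
theorem stmt_1 (q a b : ℂ) (hq : ‖q‖ < 1) (hq0 : q ≠ 0)
    (hab : ‖a‖ * ‖b‖ < ‖q‖) :
    (1 - a * b / q) *
      ∑' p : ℕ × ℕ, (-1 : ℂ) ^ (p.1 + p.2) * a ^ p.1 * b ^ p.2 *
        q ^ ((p.1 : ℤ) * (p.1 - 1) / 2 + (p.2 : ℤ) * (p.2 - 1) / 2 - p.1 * p.2)
      = 1 + ∑' n : ℕ, (-1 : ℂ) ^ (n + 1) * q ^ (n * (n + 1) / 2) *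
          (a ^ (n + 1) + b ^ (n + 1)) :=
  stmt_1_general q a b hq hab
end

section
/- Σ_{n≥0} (q;q^2)_n q^n / ((-q;q)_n (q^2;q)_n) = 2 − (q;q^2)_∞ / (q^2;q^2)_∞, for |q|<1. -/
open scoped BigOperators

/-!
The sum telescopes: with `T n = (1 + qⁿ) (q;q²)_n / (q²;q²)_n`, the `n`-th term equals
`T n - T (n + 1)`, because `(1 - q) (-q;q)_n (q²;q)_n = (q²;q²)_n (1 - q^{n+1})`.
Hence the partial sums are `T 0 - T N = 2 - T N`, and `T N → (q;q²)_∞ / (q²;q²)_∞`.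
Absolute convergence holds because the terms are a convergent sequence times `qⁿ`.
-/

open Filter Topology Asymptotics

section Pochhammer

variable {x Q : ℂ}

lemma norm_mul_pow_lt_one (hx : ‖x‖ < 1) (hQ : ‖Q‖ ≤ 1) (j : ℕ) : ‖x * Q ^ j‖ < 1 := by
  rw [norm_mul, norm_pow]
  exact (mul_le_of_le_one_right (norm_nonneg x) (pow_le_one₀ (norm_nonneg Q) hQ)).trans_lt hx

lemma one_sub_ne_zero_of_norm_lt_one {a : ℂ} (ha : ‖a‖ < 1) : 1 - a ≠ 0 := by
  rw [sub_ne_zero]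
  rintro rfl
  simp at ha

lemma qPoch_succ (x Q : ℂ) (n : ℕ) : qPoch x Q (n + 1) = qPoch x Q n * (1 - x * Q ^ n) :=
  Finset.prod_range_succ _ _

lemma qPoch_ne_zero (hx : ‖x‖ < 1) (hQ : ‖Q‖ ≤ 1) (n : ℕ) : qPoch x Q n ≠ 0 :=
  Finset.prod_ne_zero_iff.mpr fun j _ =>
    one_sub_ne_zero_of_norm_lt_one (norm_mul_pow_lt_one hx hQ j)

lemma summable_norm_neg_mul_pow (hQ : ‖Q‖ < 1) : Summable fun j : ℕ => ‖-(x * Q ^ j)‖ := by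
  simpa only [norm_neg, norm_mul, norm_pow] using
    (summable_geometric_of_lt_one (norm_nonneg Q) hQ).mul_left ‖x‖

lemma tendsto_qPoch_qPochInf (hQ : ‖Q‖ < 1) :
    Tendsto (qPoch x Q) atTop (𝓝 (qPochInf x Q)) := by
  have h := multipliable_one_add_of_summable (summable_norm_neg_mul_pow (x := x) hQ)
  simp only [← sub_eq_add_neg] at h
  exact h.hasProd.tendsto_prod_nat

lemma qPochInf_ne_zero (hx : ‖x‖ < 1) (hQ : ‖Q‖ < 1) : qPochInf x Q ≠ 0 := by
  have h := tprod_one_add_ne_zero_of_summable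
    (fun j => by
      rw [← sub_eq_add_neg]
      exact one_sub_ne_zero_of_norm_lt_one (norm_mul_pow_lt_one hx hQ.le j))
    (summable_norm_neg_mul_pow (x := x) hQ)
  rw [qPochInf]
  simpa only [← sub_eq_add_neg] using h

end Pochhammer

lemma summable_mul_pow_of_tendsto {f : ℕ → ℂ} {L q : ℂ} (hf : Tendsto f atTop (𝓝 L))
    (hq : ‖q‖ < 1) : Summable fun n => f n * q ^ n := by
  refine summable_of_isBigO_nat ((summable_geometric_of_lt_one (norm_nonneg q) hq).mul_left 1) ?_
  exact (hf.isBigO_one ℝ).mul (isBigO_of_le _ fun n => by simp)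

lemma one_sub_mul_qPoch_neg_mul_qPoch (q : ℂ) (n : ℕ) :
    (1 - q) * (qPoch (-q) q n * qPoch (q ^ 2) q n)
      = qPoch (q ^ 2) (q ^ 2) n * (1 - q ^ (n + 1)) := by
  induction n with
  | zero => simp [qPoch]
  | succ n ih =>
    rw [qPoch_succ, qPoch_succ, qPoch_succ]
    linear_combination ((1 + q * q ^ n) * (1 - q ^ 2 * q ^ n)) * ih

noncomputable def telescopingTerm (q : ℂ) (n : ℕ) : ℂ :=
  (1 + q ^ n) * qPoch q (q ^ 2) n / qPoch (q ^ 2) (q ^ 2) n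

section Telescoping

variable {q : ℂ}

lemma norm_sq_lt_one (hq : ‖q‖ < 1) : ‖q ^ 2‖ < 1 := by
  rw [norm_pow]
  exact pow_lt_one₀ (norm_nonneg q) hq two_ne_zero

lemma one_sub_pow_succ_ne_zero (hq : ‖q‖ < 1) (n : ℕ) : 1 - q ^ (n + 1) ≠ 0 :=
  one_sub_ne_zero_of_norm_lt_one <| by
    rw [norm_pow]
    exact pow_lt_one₀ (norm_nonneg q) hq n.succ_ne_zero

lemma term_eq_mul_pow (hq : ‖q‖ < 1) (n : ℕ) :
    qPoch q (q ^ 2) n * q ^ n / (qPoch (-q) q n * qPoch (q ^ 2) q n)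
      = qPoch q (q ^ 2) n * (1 - q) / (qPoch (q ^ 2) (q ^ 2) n * (1 - q ^ (n + 1))) * q ^ n := by
  have hq2 := norm_sq_lt_one hq
  have hD : qPoch (-q) q n * qPoch (q ^ 2) q n ≠ 0 :=
    mul_ne_zero (qPoch_ne_zero (by simpa using hq) hq.le n) (qPoch_ne_zero hq2 hq.le n)
  have hE : qPoch (q ^ 2) (q ^ 2) n * (1 - q ^ (n + 1)) ≠ 0 :=
    mul_ne_zero (qPoch_ne_zero hq2 hq2.le n) (one_sub_pow_succ_ne_zero hq n)
  rw [div_mul_eq_mul_div, div_eq_div_iff hD hE]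
  linear_combination (-(qPoch q (q ^ 2) n * q ^ n)) * one_sub_mul_qPoch_neg_mul_qPoch q n

lemma term_eq_telescopingTerm_sub (hq : ‖q‖ < 1) (n : ℕ) :
    qPoch q (q ^ 2) n * q ^ n / (qPoch (-q) q n * qPoch (q ^ 2) q n)
      = telescopingTerm q n - telescopingTerm q (n + 1) := by
  have hq2 := norm_sq_lt_one hq
  have hB : qPoch (q ^ 2) (q ^ 2) n ≠ 0 := qPoch_ne_zero hq2 hq2.le n
  have h1 := one_sub_pow_succ_ne_zero hq n
  have h2 : 1 - q ^ 2 * (q ^ 2) ^ n ≠ 0 :=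
    one_sub_ne_zero_of_norm_lt_one (norm_mul_pow_lt_one hq2 hq2.le n)
  rw [term_eq_mul_pow hq, telescopingTerm, telescopingTerm, qPoch_succ, qPoch_succ]
  field_simp
  ring

lemma sum_range_term (hq : ‖q‖ < 1) (N : ℕ) :
    ∑ n ∈ Finset.range N, qPoch q (q ^ 2) n * q ^ n / (qPoch (-q) q n * qPoch (q ^ 2) q n)
      = 2 - telescopingTerm q N := by
  rw [Finset.sum_congr rfl fun n _ => term_eq_telescopingTerm_sub hq n, Finset.sum_range_sub']
  norm_num [telescopingTerm, qPoch]

lemma tendsto_telescopingTerm (hq : ‖q‖ < 1) :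
    Tendsto (telescopingTerm q) atTop (𝓝 (qPochInf q (q ^ 2) / qPochInf (q ^ 2) (q ^ 2))) := by
  have hq2 := norm_sq_lt_one hq
  have h := ((tendsto_const_nhds (x := (1 : ℂ))).add
    (tendsto_pow_atTop_nhds_zero_of_norm_lt_one hq)).mul (tendsto_qPoch_qPochInf (x := q) hq2)
    |>.div (tendsto_qPoch_qPochInf hq2) (qPochInf_ne_zero hq2 hq2)
  rw [add_zero, one_mul] at h
  exact h

lemma summable_term (hq : ‖q‖ < 1) :
    Summable fun n => qPoch q (q ^ 2) n * q ^ n / (qPoch (-q) q n * qPoch (q ^ 2) q n) := by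
  have hq2 := norm_sq_lt_one hq
  have h1 : Tendsto (fun n : ℕ => 1 - q ^ (n + 1)) atTop (𝓝 (1 - 0)) :=
    tendsto_const_nhds.sub ((tendsto_pow_atTop_nhds_zero_of_norm_lt_one hq).comp
      (tendsto_add_atTop_nat 1))
  have hlim := ((tendsto_qPoch_qPochInf (x := q) hq2).mul_const (1 - q)).div
    ((tendsto_qPoch_qPochInf hq2).mul h1) (by simpa using qPochInf_ne_zero hq2 hq2)
  rw [funext (term_eq_mul_pow hq)]
  exact summable_mul_pow_of_tendsto hlim hq

end Telescoping

/-- The elegant summation following \eqref{nNB}. -/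
theorem stmt_11 (q : ℂ) (hq : ‖q‖ < 1) :
    ∑' n : ℕ, qPoch q (q ^ 2) n * q ^ n / (qPoch (-q) q n * qPoch (q ^ 2) q n)
      = 2 - qPochInf q (q ^ 2) / qPochInf (q ^ 2) (q ^ 2) := by
  refine HasSum.tsum_eq ?_
  rw [(summable_term hq).hasSum_iff_tendsto_nat]
  simpa only [sum_range_term hq] using tendsto_const_nhds.sub (tendsto_telescopingTerm hq)
end
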